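/- Let G = (X, W) be a monotone simple game on a finite set X with |X| = n, and let F be an admissible rescaling with f(n,k) = (F(n,k) − F(n,k+1)) / C(n,k). For each bijection σ : {1,…,n} → X let Q_σ(G) be the least k such that {σ(1),…,σ(k)} is winning (n+1 if no such k). Then the average over all n! bijections σ of F(n, Q_σ(G)) equals Σ_{k=0}^{n} f(n,k) |W_k|, where W_k is the set of winning coalitions of size k. -/

import Mathlib

/-- `F : ℕ × ℕ → ℝ` (curried) is an admissible rescaling: `F n k` is nonincreasing in `k`
for each fixed `n`, `F n 0 = 1`, and `F n k = 0` whenever `k > n`. -/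
def Admissible (F : ℕ → ℕ → ℝ) : Prop :=
  (∀ n, Antitone (F n)) ∧ (∀ n, F n 0 = 1) ∧ (∀ n k, n < k → F n k = 0)

/-- The weight function `f(n,k) = (F(n,k) − F(n,k+1)) / C(n,k)` associated to `F`. -/
noncomputable def fwt (F : ℕ → ℕ → ℝ) (n k : ℕ) : ℝ :=
  (F n k - F n (k + 1)) / (n.choose k : ℝ)

/-- The set of the first `k` players queried, according to the ordering `σ`. -/
def initSeg {n : ℕ} {X : Type*} [DecidableEq X] (σ : Fin n ≃ X) (k : ℕ) : Finset X :=
  (Finset.univ.filter fun j : Fin n => (j : ℕ) < k).image σ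

open Classical in
/-- The number of queries needed to find a winning coalition under the ordering `σ`:
the least `k` such that the first `k` players queried form a winning coalition, and
`n + 1` if no such `k` exists. -/
noncomputable def Qval {n : ℕ} {X : Type*} [DecidableEq X] (W : Finset (Finset X))
    (σ : Fin n ≃ X) : ℕ :=
  if h : ∃ k, initSeg σ k ∈ W then Nat.find h else n + 1

/-! Since `F n (n + 1) = 0`, telescoping gives
`F(n, Q_σ) = ∑_{Q_σ ≤ k ≤ n} (F(n,k) − F(n,k+1))`, and by monotonicity of the game `Q_σ ≤ k`
exactly when the first `k` players queried win. Summing over `σ`, a coalition of size `k` is the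
set of the first `k` players for exactly `k! (n − k)!` orderings, and
`n! / (k! (n − k)!) = C(n, k)`. -/

open Finset

theorem sum_range_ite_le_sub {M : Type*} [AddCommGroup M] (g : ℕ → M) {q m : ℕ}
    (hq : q ≤ m) :
    ∑ k ∈ range m, (if q ≤ k then g k - g (k + 1) else 0) = g q - g m := by
  have hIco : (range m).filter (q ≤ ·) = Ico q m := by
    ext k
    simp [and_comm]
  rw [← sum_filter, hIco]
  simpa only [neg_sub_neg] using sum_Ico_sub (fun i => -g i) hq

namespace Equiv

variable {α β : Type*} (p : α → Prop) (q : β → Prop) [DecidablePred p] [DecidablePred q]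

def subtypeEquivEquivProd :
    {e : α ≃ β // ∀ a, p a ↔ q (e a)} ≃
      ({a // p a} ≃ {b // q b}) × ({a // ¬p a} ≃ {b // ¬q b}) where
  toFun e := (e.1.subtypeEquiv e.2, e.1.subtypeEquiv fun a => not_congr (e.2 a))
  invFun ef := ⟨(sumCompl p).symm.trans ((sumCongr ef.1 ef.2).trans (sumCompl q)), fun a => by
    by_cases h : p a
    · simpa [h] using (ef.1 ⟨a, h⟩).2
    · simpa [h] using (ef.2 ⟨a, h⟩).2⟩
  left_inv e := by
    ext a
    by_cases h : p a <;> simp [h]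
  right_inv ef := by
    ext <;> simp

end Equiv

section initSeg

variable {n : ℕ} {X : Type*} [DecidableEq X] (σ : Fin n ≃ X) {k : ℕ}

@[simp]
theorem mem_initSeg {x : X} : x ∈ initSeg σ k ↔ (σ.symm x : ℕ) < k := by
  simp [initSeg, ← Equiv.eq_symm_apply]

theorem initSeg_mono : Monotone (initSeg σ) := by
  intro j k hjk x
  simp only [mem_initSeg]
  omega

theorem initSeg_min_self : initSeg σ (min k n) = initSeg σ k := by
  ext x
  have := (σ.symm x).isLt
  simp only [mem_initSeg]
  omega

theorem initSeg_self [Fintype X] : initSeg σ n = univ := by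
  ext x
  simp [(σ.symm x).isLt]

theorem card_initSeg (hk : k ≤ n) : #(initSeg σ k) = k := by
  rw [initSeg, card_image_of_injective _ σ.injective, Fin.card_filter_val_lt, min_eq_right hk]

theorem initSeg_eq_iff {S : Finset X} :
    initSeg σ k = S ↔ ∀ j : Fin n, (j : ℕ) < k ↔ σ j ∈ S := by
  rw [Finset.ext_iff, σ.symm.forall_congr_left]
  simp

end initSeg

section Qval

variable {n : ℕ} {X : Type*} [DecidableEq X] {W : Finset (Finset X)} (σ : Fin n ≃ X)

theorem Qval_le_succ : Qval W σ ≤ n + 1 := by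
  unfold Qval
  split_ifs with h
  · obtain ⟨k, hk⟩ := h
    calc Nat.find _ ≤ min k n := Nat.find_min' _ ((initSeg_min_self σ).symm ▸ hk)
      _ ≤ n + 1 := (min_le_right k n).trans n.le_succ
  · rfl

theorem Qval_le_iff (hmono : ∀ A B : Finset X, A ∈ W → A ⊆ B → B ∈ W) {k : ℕ}
    (hk : k ≤ n) : Qval W σ ≤ k ↔ initSeg σ k ∈ W := by
  unfold Qval
  split_ifs with h
  · rw [Nat.find_le_iff]
    exact ⟨fun ⟨m, hmk, hm⟩ => hmono _ _ hm (initSeg_mono σ hmk),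
      fun hk => ⟨k, le_rfl, hk⟩⟩
  · simp only [not_exists] at h
    simp only [h k, iff_false, not_le]
    omega

theorem apply_Qval_eq_sum (hmono : ∀ A B : Finset X, A ∈ W → A ⊆ B → B ∈ W)
    (g : ℕ → ℝ) (hg : g (n + 1) = 0) :
    g (Qval W σ) = ∑ k ∈ range (n + 1), if initSeg σ k ∈ W then g k - g (k + 1) else 0 := by
  calc g (Qval W σ) = g (Qval W σ) - g (n + 1) := by rw [hg, sub_zero]
    _ = ∑ k ∈ range (n + 1), if Qval W σ ≤ k then g k - g (k + 1) else 0 :=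
      (sum_range_ite_le_sub g (Qval_le_succ σ)).symm
    _ = _ := sum_congr rfl fun k hk => by
      simp only [Qval_le_iff σ hmono (mem_range_succ_iff.mp hk)]

end Qval

section Counting

variable {n k : ℕ} {X : Type*} [Fintype X] [DecidableEq X]

theorem card_filter_initSeg_eq (hn : Fintype.card X = n) (hk : k ≤ n) {S : Finset X}
    (hS : #S = k) :
    #{σ : Fin n ≃ X | initSeg σ k = S} = k.factorial * (n - k).factorial := by
  have hcard : Fintype.card {j : Fin n // (j : ℕ) < k} = k := by
    rw [Fintype.card_subtype, Fin.card_filter_val_lt, min_eq_right hk]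
  have hcardS : Fintype.card {x // x ∈ S} = k := by simp [hS]
  have hcompl : Fintype.card {j : Fin n // ¬(j : ℕ) < k} = Fintype.card {x // x ∉ S} := by
    rw [Fintype.card_subtype_compl, Fintype.card_subtype_compl, hcard, hcardS, Fintype.card_fin, hn]
  have e : {σ : Fin n ≃ X // initSeg σ k = S} ≃
      ({j : Fin n // (j : ℕ) < k} ≃ {x // x ∈ S}) ×
        ({j : Fin n // ¬(j : ℕ) < k} ≃ {x // x ∉ S}) :=
    (Equiv.subtypeEquivRight fun σ => initSeg_eq_iff σ).trans (Equiv.subtypeEquivEquivProd _ _)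
  rw [← Fintype.card_subtype, Fintype.card_congr e, Fintype.card_prod,
    Fintype.card_equiv (Fintype.equivOfCardEq (hcard.trans hcardS.symm)),
    Fintype.card_equiv (Fintype.equivOfCardEq hcompl), hcard, Fintype.card_subtype_compl, hcard,
    Fintype.card_fin]

theorem card_filter_initSeg_mem (hn : Fintype.card X = n) (hk : k ≤ n)
    (W : Finset (Finset X)) :
    #{σ : Fin n ≃ X | initSeg σ k ∈ W} =
      #{S ∈ W | #S = k} * (k.factorial * (n - k).factorial) := by
  rw [card_eq_sum_card_fiberwise (f := fun σ => initSeg σ k) (t := {S ∈ W | #S = k})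
    fun σ hσ => by simpa [card_initSeg σ hk] using hσ]
  refine sum_const_nat fun S hS => ?_
  rw [mem_filter] at hS
  rw [filter_filter, ← card_filter_initSeg_eq hn hk hS.2]
  congr 1
  exact filter_congr fun σ _ => ⟨And.right, fun h => ⟨h ▸ hS.1, h⟩⟩

end Counting

theorem fwt_mul_factorial (F : ℕ → ℕ → ℝ) {n k : ℕ} (hk : k ≤ n) :
    fwt F n k * n.factorial = (F n k - F n (k + 1)) * (k.factorial * (n - k).factorial) := by
  have hchoose : (n.choose k : ℝ) ≠ 0 := Nat.cast_ne_zero.mpr (Nat.choose_pos hk).ne'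
  rw [fwt, ← Nat.choose_mul_factorial_mul_factorial hk]
  push_cast
  field_simp

theorem statement3_general {X : Type*} [Fintype X] [DecidableEq X] (n : ℕ)
    (hn : Fintype.card X = n) (W : Finset (Finset X))
    (hmono : ∀ A B : Finset X, A ∈ W → A ⊆ B → B ∈ W)
    (F : ℕ → ℕ → ℝ) (hF : Admissible F) :
    (∑ σ : Fin n ≃ X, F n (Qval W σ)) / (n.factorial : ℝ)
      = ∑ k ∈ Finset.range (n + 1),
          fwt F n k * ((W.filter fun S => S.card = k).card : ℝ) := by
  have hFn : F n (n + 1) = 0 := hF.2.2 n (n + 1) n.lt_succ_self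
  rw [div_eq_iff (by positivity), sum_mul]
  calc ∑ σ : Fin n ≃ X, F n (Qval W σ)
      = ∑ k ∈ range (n + 1), ∑ σ : Fin n ≃ X,
          if initSeg σ k ∈ W then F n k - F n (k + 1) else 0 := by
        rw [sum_comm]
        exact sum_congr rfl fun σ _ => apply_Qval_eq_sum σ hmono (F n) hFn
    _ = ∑ k ∈ range (n + 1),
          #{σ : Fin n ≃ X | initSeg σ k ∈ W} * (F n k - F n (k + 1)) := by
        simp only [← sum_filter, sum_const, nsmul_eq_mul]
    _ = _ := sum_congr rfl fun k hk => by
        rw [card_filter_initSeg_mem hn (mem_range_succ_iff.mp hk), mul_right_comm,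
          fwt_mul_factorial F (mem_range_succ_iff.mp hk)]
        push_cast
        ring

/-- For a monotone simple game `(X, W)` with `|X| = n` and an admissible
rescaling `F`, the average over all `n!` bijections `σ` of `F(n, Q_σ(G))` equals
`∑_{k=0}^{n} f(n,k) |W_k|`. -/
theorem statement3 {X : Type*} [Fintype X] [DecidableEq X] (n : ℕ)
    (hn : Fintype.card X = n) (W : Finset (Finset X)) (hW : ∅ ∉ W)
    (hmono : ∀ A B : Finset X, A ∈ W → A ⊆ B → B ∈ W)
    (F : ℕ → ℕ → ℝ) (hF : Admissible F) :
    (∑ σ : Fin n ≃ X, F n (Qval W σ)) / (n.factorial : ℝ)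
      = ∑ k ∈ Finset.range (n + 1),
          fwt F n k * ((W.filter fun S => S.card = k).card : ℝ) :=
  statement3_general n hn W hmono F hF
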